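/- Let A be a quasitriangular bialgebra over a field F with R-matrix R, (ψ, J) a twist pair for A, and K an invertible element of A with Δ(K) = J⁻¹·(1⊗K)·R^ψ·(K⊗1). Define the algebra automorphism ξ = Ad(K⁻¹)∘ψ of A (where Ad(K⁻¹)(a) = K⁻¹·a·K) and set B_ξ = { a ∈ A : (ξ⊗id)(Δ(a)) = Δ(a) }. Then: (i) B_ξ is a right coideal subalgebra of A contained in the fixed-point subalgebra A^ξ, and it contains every right coideal subalgebra of A contained in A^ξ; (ii) the tensor K-matrix 𝕂 = (R^ψ)₂₁·(1⊗K)·R lies in B_ξ⊗A (the image of B_ξ⊗A in A⊗A). -/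

import Mathlib

open TensorProduct

noncomputable section

variable (F : Type*) [Field F]

section BialgDefs

variable (A : Type*) [Ring A] [Bialgebra F A]

/-- Conjugation by an invertible element, as an algebra automorphism. -/
def conjEquiv (g gi : A) (h1 : g * gi = 1) (h2 : gi * g = 1) : A ≃ₐ[F] A where
  toFun a := g * a * gi
  invFun a := gi * a * g
  left_inv a := by simp only [← mul_assoc]; rw [h2, one_mul, mul_assoc, h2, mul_one]
  right_inv a := by simp only [← mul_assoc]; rw [h1, one_mul, mul_assoc, h1, mul_one]
  map_mul' a b := by
    show g * (a * b) * gi = (g * a * gi) * (g * b * gi)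
    simp only [mul_assoc]; rw [← mul_assoc gi g, h2, one_mul]
  map_add' a b := by
    show g * (a + b) * gi = g * a * gi + g * b * gi
    rw [mul_add, add_mul]
  commutes' r := by
    show g * algebraMap F A r * gi = algebraMap F A r
    rw [← Algebra.commutes r g, mul_assoc, h1, mul_one]

/-- The coproduct of `A`, as an algebra map. -/
def cop : A →ₐ[F] A ⊗[F] A := Bialgebra.comulAlgHom F A

/-- The flip of the two tensor legs. -/
def flipT : (A ⊗[F] A) ≃ₐ[F] A ⊗[F] A := Algebra.TensorProduct.comm F A A

/-- The opposite coproduct. -/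
def copOp : A →ₐ[F] A ⊗[F] A := (flipT F A).toAlgHom.comp (cop F A)

/-- `X ↦ X₁₂` on triple tensors. -/
def i12 : (A ⊗[F] A) →ₐ[F] A ⊗[F] (A ⊗[F] A) :=
  Algebra.TensorProduct.map (AlgHom.id F A) Algebra.TensorProduct.includeLeft

/-- `X ↦ X₁₃` on triple tensors. -/
def i13 : (A ⊗[F] A) →ₐ[F] A ⊗[F] (A ⊗[F] A) :=
  Algebra.TensorProduct.map (AlgHom.id F A) Algebra.TensorProduct.includeRight

/-- `X ↦ X₂₃` on triple tensors. -/
def i23 : (A ⊗[F] A) →ₐ[F] A ⊗[F] (A ⊗[F] A) :=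
  Algebra.TensorProduct.includeRight

/-- `Δ ⊗ id` landing in `A ⊗ (A ⊗ A)`. -/
def cop12 : (A ⊗[F] A) →ₐ[F] A ⊗[F] (A ⊗[F] A) :=
  (Algebra.TensorProduct.assoc F F F A A A).toAlgHom.comp
    (Algebra.TensorProduct.map (cop F A) (AlgHom.id F A))

/-- `id ⊗ Δ`. -/
def cop23 : (A ⊗[F] A) →ₐ[F] A ⊗[F] (A ⊗[F] A) :=
  Algebra.TensorProduct.map (AlgHom.id F A) (cop F A)

/-- `ε ⊗ id`. -/
def counit2l : (A ⊗[F] A) →ₐ[F] A :=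
  (Algebra.TensorProduct.lid F A).toAlgHom.comp
    (Algebra.TensorProduct.map (Bialgebra.counitAlgHom F A) (AlgHom.id F A))

/-- `id ⊗ ε`. -/
def counit2r : (A ⊗[F] A) →ₐ[F] A :=
  (Algebra.TensorProduct.rid F F A).toAlgHom.comp
    (Algebra.TensorProduct.map (AlgHom.id F A) (Bialgebra.counitAlgHom F A))

/-- `ψ ⊗ φ` on `A ⊗ A`. -/
def mapT (ψ φ : A →ₐ[F] A) : (A ⊗[F] A) →ₐ[F] A ⊗[F] A := Algebra.TensorProduct.map ψ φ

/-- `R^ψ = (ψ ⊗ id)(R)`. -/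
def rpsi (R : A ⊗[F] A) (ψ : A ≃ₐ[F] A) : A ⊗[F] A :=
  Algebra.TensorProduct.map ψ.toAlgHom (AlgHom.id F A) R

/-- `A` is quasitriangular with R-matrix `R` (with inverse `Ri`). -/
structure IsQT (R Ri : A ⊗[F] A) : Prop where
  mulInv : R * Ri = 1
  invMul : Ri * R = 1
  intw : ∀ a : A, R * cop F A a * Ri = copOp F A a
  copL : cop12 F A R = i13 F A R * i23 F A R
  copR : cop23 F A R = i13 F A R * i12 F A R

/-- `(ψ, J)` is a twist pair (with `Ji` the inverse of `J`). -/
structure IsTwistPair (R Ri J Ji : A ⊗[F] A) (ψ : A ≃ₐ[F] A) : Prop where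
  mulInv : J * Ji = 1
  invMul : Ji * J = 1
  cocycle : i12 F A J * cop12 F A J = i23 F A J * cop23 F A J
  counitL : counit2l F A J = 1
  counitR : counit2r F A J = 1
  intw : ∀ a : A,
    mapT F A ψ.toAlgHom ψ.toAlgHom (copOp F A (ψ.symm a)) = J * cop F A a * Ji
  rrel : flipT F A (mapT F A ψ.toAlgHom ψ.toAlgHom R) = flipT F A J * R * Ji

/-- The image of `s ⊗ A` inside `A ⊗ A`, for a subset `s ⊆ A`. -/
def legSpan (s : Set A) : Submodule F (A ⊗[F] A) :=
  Submodule.span F {x : A ⊗[F] A | ∃ b ∈ s, ∃ a : A, x = b ⊗ₜ[F] a}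

/-- `B` is a right coideal subalgebra of `A`. -/
def IsRightCoideal (B : Subalgebra F A) : Prop :=
  ∀ b ∈ B, cop F A b ∈ legSpan F A (B : Set A)

/-- The tensor K-matrix `𝕂 = (R^ψ)₂₁ ⬝ (1 ⊗ K) ⬝ R`. -/
def tenK (R : A ⊗[F] A) (ψ : A ≃ₐ[F] A) (K : A) : A ⊗[F] A :=
  flipT F A (rpsi F A R ψ) * ((1 : A) ⊗ₜ[F] K) * R

/-- `(ψ, J, K)` is a cylindrical structure on `(A, B)`. -/
structure IsCylindrical (R Ri : A ⊗[F] A) (B : Subalgebra F A) (J Ji : A ⊗[F] A)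
    (ψ : A ≃ₐ[F] A) (K Kinv : A) : Prop where
  twist : IsTwistPair F A R Ri J Ji ψ
  kMulInv : K * Kinv = 1
  kInvMul : Kinv * K = 1
  intwB : ∀ b ∈ B, K * b * Kinv = ψ b
  support : tenK F A R ψ K ∈ legSpan F A (B : Set A)
  copK : cop F A K = Ji * (((1 : A) ⊗ₜ[F] K) * (rpsi F A R ψ * (K ⊗ₜ[F] (1 : A))))

end BialgDefs

section ModuleDefs

variable (A : Type*) [Ring A] [Bialgebra F A]

/-- Right partial transpose on `End V ⊗ End W`. -/
def pt2 (V W : Type*) [AddCommGroup V] [Module F V] [AddCommGroup W] [Module F W] :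
    (Module.End F V ⊗[F] Module.End F W) →ₗ[F]
      (Module.End F V ⊗[F] Module.End F (Module.Dual F W)) :=
  TensorProduct.map LinearMap.id (Module.Dual.transpose (R := F) (M := W) (M' := W))

/-- Identification `End V ⊗ End (W^∨∨) ≃ End V ⊗ End W` via the canonical iso `W ≅ W^∨∨`. -/
def ddIdent (V W : Type*) [AddCommGroup V] [Module F V] [AddCommGroup W] [Module F W]
    [FiniteDimensional F W] :
    (Module.End F V ⊗[F] Module.End F (Module.Dual F (Module.Dual F W))) →ₗ[F]
      (Module.End F V ⊗[F] Module.End F W) :=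
  TensorProduct.map LinearMap.id ((Module.evalEquiv F W).conj.symm).toLinearMap

/-- The right partial trace `A ⊗ End V → A`. -/
def trace2 (V : Type*) [AddCommGroup V] [Module F V] :
    (A ⊗[F] Module.End F V) →ₗ[F] A :=
  (TensorProduct.rid F A).toLinearMap.comp
    (TensorProduct.map LinearMap.id (LinearMap.trace F V))

/-- `T_{•,V}`: act with the second leg on `V`. -/
def actRight (V : Type*) [AddCommGroup V] [Module F V] (ρV : A →ₐ[F] Module.End F V) :
    (A ⊗[F] A) →ₐ[F] A ⊗[F] Module.End F V :=
  Algebra.TensorProduct.map (AlgHom.id F A) ρV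

/-- The boundary transfer matrix `Tr₂(𝕂₍•,V₎)`. -/
def transfer (V : Type*) [AddCommGroup V] [Module F V] (ρV : A →ₐ[F] Module.End F V)
    (T : A ⊗[F] A) : A :=
  trace2 F A V (actRight F A V ρV T)

/-- The module structure on `V ⊗ W` obtained from `Δ`. -/
def tensorRep (V W : Type*) [AddCommGroup V] [Module F V] [AddCommGroup W] [Module F W]
    (ρV : A →ₐ[F] Module.End F V) (ρW : A →ₐ[F] Module.End F W) :
    A →ₐ[F] Module.End F (V ⊗[F] W) :=
  (Module.endTensorEndAlgHom (R := F) (S := F) (A := F) (M := V) (N := W)).comp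
    ((Algebra.TensorProduct.map ρV ρW).comp (cop F A))

/-- `g` (with inverse `gi`) is a boundary gauge transformation for the twist pair `(ψ, J)`. -/
def IsBoundaryGauge (R J : A ⊗[F] A) (ψ : A ≃ₐ[F] A) (g gi : A)
    (hg1 : g * gi = 1) (hg2 : gi * g = 1) : Prop :=
  ∀ (V W : Type) [AddCommGroup V] [Module F V] [FiniteDimensional F V]
    [AddCommGroup W] [Module F W] [FiniteDimensional F W]
    (ρV : A →ₐ[F] Module.End F V) (ρW : A →ₐ[F] Module.End F W),
    let X := pt2 F V W
      ((Algebra.TensorProduct.map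
        (ρV.comp (ψ.trans (conjEquiv F A g gi hg1 hg2)).toAlgHom) ρW) R)
    IsUnit X ∧ IsUnit (pt2 F V (Module.Dual F W) (Ring.inverse X)) ∧
      (Algebra.TensorProduct.map ρV ρW) ((g ⊗ₜ[F] g) * J * cop F A gi) =
        ddIdent F V W (Ring.inverse (pt2 F V (Module.Dual F W) (Ring.inverse X)))

end ModuleDefs

/-- The automorphism `ξ = Ad(K⁻¹) ∘ ψ`. -/
def xiAut {F A : Type*} [Field F] [Ring A] [Bialgebra F A] (ψ : A ≃ₐ[F] A)
    (K Kinv : A) (hK1 : K * Kinv = 1) (hK2 : Kinv * K = 1) : A ≃ₐ[F] A :=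
  ψ.trans (conjEquiv F A Kinv K hK2 hK1)

/-- The set `B_ξ = { a ∈ A | (ξ ⊗ id)(Δ(a)) = Δ(a) }`. -/
def BxiSet {F A : Type*} [Field F] [Ring A] [Bialgebra F A] (ψ : A ≃ₐ[F] A)
    (K Kinv : A) (hK1 : K * Kinv = 1) (hK2 : Kinv * K = 1) : Set A :=
  {a : A | (mapT F A (xiAut ψ K Kinv hK1 hK2).toAlgHom (AlgHom.id F A)) (cop F A a) =
    cop F A a}


/-!
`B_ξ` is the kernel of the linear map `a ↦ (ξ ⊗ id)(Δ a) - Δ a`. Since `A` is flat over the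
field `F`, tensoring this kernel with `A` is exact, so an element `x ∈ A ⊗ A` lies in `B_ξ ⊗ A`
as soon as `(Δ ⊗ id)(x)` is fixed by `ξ ⊗ id ⊗ id`. Coassociativity then makes `B_ξ` a right
coideal, applying `id ⊗ ε` shows that `ξ` fixes `B_ξ`, and `ξ ⊗ id` fixes `B ⊗ A` pointwise for
every right coideal subalgebra `B ⊆ A^ξ`.

For `𝕂`, the twist-pair relation `((ψ ⊗ ψ) R)₂₁ = J₂₁ R J⁻¹`, the intertwining property of `R`
and the formula for `Δ(K)` give `(ψ ⊗ id)(𝕂) = (K ⊗ 1) 𝕂 (K ⊗ 1)⁻¹`, i.e. `(ξ ⊗ id)(𝕂) = 𝕂`.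
The hexagon axioms give `(Δ ⊗ id)(𝕂) = ((R^ψ)₂₁)₂₃ 𝕂₁₃ R₂₃`, whose outer factors are untouched
by `ξ ⊗ id ⊗ id`.
-/

section

variable {F} {A : Type*} [Ring A] [Bialgebra F A]

lemma cop_apply (a : A) : cop F A a = Coalgebra.comul a := rfl

lemma mapT_tmul (f g : A →ₐ[F] A) (a b : A) : mapT F A f g (a ⊗ₜ b) = f a ⊗ₜ g b := rfl

lemma flipT_tmul (a b : A) : flipT F A (a ⊗ₜ b) = b ⊗ₜ a := rfl

lemma i23_apply (x : A ⊗[F] A) : i23 F A x = 1 ⊗ₜ x := rfl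

lemma cop23_tmul (a b : A) : cop23 F A (a ⊗ₜ b) = a ⊗ₜ cop F A b := rfl

lemma cop12_tmul (a b : A) :
    cop12 F A (a ⊗ₜ b) = TensorProduct.assoc F A A A (cop F A a ⊗ₜ b) := rfl

lemma mapT_flipT (f : A →ₐ[F] A) (x : A ⊗[F] A) :
    mapT F A f (AlgHom.id F A) (flipT F A x) = flipT F A (mapT F A (AlgHom.id F A) f x) := by
  induction x using TensorProduct.induction_on with
  | zero => simp
  | tmul a b => rfl
  | add x y hx hy => simp only [map_add, hx, hy]

lemma mapT_id_mapT (f g : A →ₐ[F] A) (x : A ⊗[F] A) :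
    mapT F A (AlgHom.id F A) f (mapT F A g (AlgHom.id F A) x) = mapT F A g f x := by
  induction x using TensorProduct.induction_on with
  | zero => simp
  | tmul a b => rfl
  | add x y hx hy => simp only [map_add, hx, hy]

lemma assoc_mapT_tmul (f : A →ₐ[F] A) (y : A ⊗[F] A) (b : A) :
    TensorProduct.assoc F A A A (mapT F A f (AlgHom.id F A) y ⊗ₜ b) =
      Algebra.TensorProduct.map f (AlgHom.id F (A ⊗[F] A))
        (TensorProduct.assoc F A A A (y ⊗ₜ b)) := by
  induction y using TensorProduct.induction_on with
  | zero => simp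
  | tmul a c => rfl
  | add x y hx hy => simp only [map_add, TensorProduct.add_tmul, hx, hy]

lemma cop23_mapT (f : A →ₐ[F] A) (x : A ⊗[F] A) :
    cop23 F A (mapT F A f (AlgHom.id F A) x) =
      Algebra.TensorProduct.map f (AlgHom.id F (A ⊗[F] A)) (cop23 F A x) := by
  induction x using TensorProduct.induction_on with
  | zero => simp
  | tmul a b => rfl
  | add x y hx hy => simp only [map_add, hx, hy]

lemma map_i23 (f : A →ₐ[F] A) (x : A ⊗[F] A) :
    Algebra.TensorProduct.map f (AlgHom.id F (A ⊗[F] A)) (i23 F A x) = i23 F A x := by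
  simp [i23_apply]

lemma map_i13 (f : A →ₐ[F] A) (x : A ⊗[F] A) :
    Algebra.TensorProduct.map f (AlgHom.id F (A ⊗[F] A)) (i13 F A x) =
      i13 F A (mapT F A f (AlgHom.id F A) x) := by
  induction x using TensorProduct.induction_on with
  | zero => simp
  | tmul a b => rfl
  | add x y hx hy => simp only [map_add, hx, hy]

lemma cop12_cop (a : A) : cop12 F A (cop F A a) = cop23 F A (cop F A a) := by
  have hcop12 : (cop12 F A).toLinearMap =
      (TensorProduct.assoc F A A A).toLinearMap ∘ₗ (Coalgebra.comul (R := F)).rTensor A :=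
    TensorProduct.ext' fun _ _ => rfl
  have hcop23 : (cop23 F A).toLinearMap = (Coalgebra.comul (R := F) (A := A)).lTensor A :=
    TensorProduct.ext' fun _ _ => rfl
  exact (LinearMap.congr_fun hcop12 _).trans
    ((Coalgebra.coassoc_apply a).trans (LinearMap.congr_fun hcop23 _).symm)

lemma counit2r_mapT (f : A →ₐ[F] A) (x : A ⊗[F] A) :
    counit2r F A (mapT F A f (AlgHom.id F A) x) = f (counit2r F A x) := by
  induction x using TensorProduct.induction_on with
  | zero => simp
  | tmul a b => simp [mapT_tmul, counit2r]
  | add x y hx hy => simp only [map_add, hx, hy]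

lemma counit2r_cop (a : A) : counit2r F A (cop F A a) = a := by
  have hcounit2r : (counit2r F A).toLinearMap =
      (TensorProduct.rid F A).toLinearMap ∘ₗ (Coalgebra.counit (R := F)).lTensor A :=
    TensorProduct.ext' fun _ _ => rfl
  rw [← AlgHom.toLinearMap_apply, hcounit2r, LinearMap.comp_apply, cop_apply,
    Coalgebra.lTensor_counit_comul, LinearEquiv.coe_coe, TensorProduct.rid_tmul, one_smul]

section FixSubalgebra

variable (ξ : A →ₐ[F] A)

def fixSubalgebra : Subalgebra F A :=
  AlgHom.equalizer ((mapT F A ξ (AlgHom.id F A)).comp (cop F A)) (cop F A)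

lemma mem_fixSubalgebra {a : A} :
    a ∈ fixSubalgebra ξ ↔ mapT F A ξ (AlgHom.id F A) (cop F A a) = cop F A a := Iff.rfl

def fixDefect : A →ₗ[F] A ⊗[F] A :=
  (mapT F A ξ (AlgHom.id F A)).toLinearMap ∘ₗ (cop F A).toLinearMap - (cop F A).toLinearMap

lemma coe_ker_fixDefect : (LinearMap.ker (fixDefect ξ) : Set A) = fixSubalgebra ξ := by
  ext a
  simp [fixDefect, sub_eq_zero, mem_fixSubalgebra]

lemma assoc_rTensor_fixDefect (x : A ⊗[F] A) :
    TensorProduct.assoc F A A A ((fixDefect ξ).rTensor A x) =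
      Algebra.TensorProduct.map ξ (AlgHom.id F (A ⊗[F] A)) (cop12 F A x) - cop12 F A x := by
  induction x using TensorProduct.induction_on with
  | zero => simp
  | tmul a b =>
    rw [LinearMap.rTensor_tmul, fixDefect, LinearMap.sub_apply, TensorProduct.sub_tmul, map_sub,
      cop12_tmul]
    exact congrArg (· - _) (assoc_mapT_tmul ξ _ b)
  | add x y hx hy => simp only [map_add, hx, hy]; abel

lemma range_rTensor_subtype_le_legSpan (S : Submodule F A) :
    LinearMap.range (S.subtype.rTensor A) ≤ legSpan F A S := by
  rintro _ ⟨y, rfl⟩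
  induction y using TensorProduct.induction_on with
  | zero => simp
  | tmul b a => exact Submodule.subset_span ⟨b, b.2, a, rfl⟩
  | add x y hx hy => rw [map_add]; exact add_mem hx hy

lemma mem_legSpan_fixSubalgebra_of_cop12 {x : A ⊗[F] A}
    (hx : Algebra.TensorProduct.map ξ (AlgHom.id F (A ⊗[F] A)) (cop12 F A x) = cop12 F A x) :
    x ∈ legSpan F A (fixSubalgebra ξ) := by
  have hker : (fixDefect ξ).rTensor A x = 0 :=
    (TensorProduct.assoc F A A A).injective <| by
      rw [assoc_rTensor_fixDefect, hx, sub_self, map_zero]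
  have hexact := Module.Flat.rTensor_exact A (LinearMap.exact_subtype_ker_map (fixDefect ξ))
  have hx := range_rTensor_subtype_le_legSpan _ ((hexact x).mp hker)
  rwa [coe_ker_fixDefect] at hx

lemma isRightCoideal_fixSubalgebra : IsRightCoideal F A (fixSubalgebra ξ) := by
  intro a ha
  apply mem_legSpan_fixSubalgebra_of_cop12
  rw [cop12_cop, ← cop23_mapT, (mem_fixSubalgebra ξ).mp ha]

lemma apply_eq_self_of_mem_fixSubalgebra {a : A} (ha : a ∈ fixSubalgebra ξ) : ξ a = a := by
  simpa only [counit2r_mapT, counit2r_cop] using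
    congrArg (counit2r F A) ((mem_fixSubalgebra ξ).mp ha)

lemma mapT_eq_self_of_mem_legSpan {s : Set A} (hs : ∀ b ∈ s, ξ b = b) {x : A ⊗[F] A}
    (hx : x ∈ legSpan F A s) : mapT F A ξ (AlgHom.id F A) x = x := by
  induction hx using Submodule.span_induction with
  | mem _ h => obtain ⟨b, hb, a, rfl⟩ := h; rw [mapT_tmul, hs b hb]; rfl
  | zero => exact map_zero _
  | add _ _ _ _ hx hy => rw [map_add, hx, hy]
  | smul c _ _ hx => rw [map_smul, hx]

lemma le_fixSubalgebra {B : Subalgebra F A} (hB : IsRightCoideal F A B) (hξ : ∀ b ∈ B, ξ b = b) :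
    B ≤ fixSubalgebra ξ :=
  fun b hb => mapT_eq_self_of_mem_legSpan ξ hξ (hB b hb)

end FixSubalgebra

section CoproductOfTensorK

-- `a ⊗ (b ⊗ c) ↦ b ⊗ (c ⊗ a)`
def rotate3 : A ⊗[F] (A ⊗[F] A) →ₐ[F] A ⊗[F] (A ⊗[F] A) :=
  (Algebra.TensorProduct.assoc F F F A A A).toAlgHom.comp
    (Algebra.TensorProduct.comm F A (A ⊗[F] A)).toAlgHom

lemma cop12_flipT (x : A ⊗[F] A) : cop12 F A (flipT F A x) = rotate3 (cop23 F A x) := by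
  induction x using TensorProduct.induction_on with
  | zero => simp
  | tmul a b =>
    rw [flipT_tmul, cop12_tmul, cop23_tmul]
    induction cop F A b using TensorProduct.induction_on with
    | zero => simp
    | tmul u v => rfl
    | add x y hx hy => simp only [TensorProduct.add_tmul, TensorProduct.tmul_add, map_add, hx, hy]
  | add x y hx hy => simp only [map_add, hx, hy]

lemma rotate3_map_i13 (f : A →ₐ[F] A) (x : A ⊗[F] A) :
    rotate3 (Algebra.TensorProduct.map f (AlgHom.id F (A ⊗[F] A)) (i13 F A x)) =
      i23 F A (flipT F A (mapT F A f (AlgHom.id F A) x)) := by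
  induction x using TensorProduct.induction_on with
  | zero => simp
  | tmul a b => rfl
  | add x y hx hy => simp only [map_add, hx, hy]

lemma rotate3_map_i12 (f : A →ₐ[F] A) (x : A ⊗[F] A) :
    rotate3 (Algebra.TensorProduct.map f (AlgHom.id F (A ⊗[F] A)) (i12 F A x)) =
      i13 F A (flipT F A (mapT F A f (AlgHom.id F A) x)) := by
  induction x using TensorProduct.induction_on with
  | zero => simp
  | tmul a b => rfl
  | add x y hx hy => simp only [map_add, hx, hy]

lemma cop12_one_tmul (K : A) : cop12 F A (1 ⊗ₜ K) = i13 F A (1 ⊗ₜ K) := by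
  simp [cop12_tmul, Algebra.TensorProduct.one_def, i13]

variable {R Ri : A ⊗[F] A}

lemma IsQT.mul_cop (hQT : IsQT F A R Ri) (a : A) : R * cop F A a = copOp F A a * R := by
  rw [← hQT.intw a, mul_assoc _ Ri, hQT.invMul, mul_one]

lemma IsQT.cop12_flipT_rpsi (hQT : IsQT F A R Ri) (ψ : A ≃ₐ[F] A) :
    cop12 F A (flipT F A (rpsi F A R ψ)) =
      i23 F A (flipT F A (rpsi F A R ψ)) * i13 F A (flipT F A (rpsi F A R ψ)) := by
  rw [rpsi, cop12_flipT, ← mapT, cop23_mapT, hQT.copR, map_mul, map_mul, rotate3_map_i13,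
    rotate3_map_i12]

lemma IsQT.cop12_tenK (hQT : IsQT F A R Ri) (ψ : A ≃ₐ[F] A) (K : A) :
    cop12 F A (tenK F A R ψ K) =
      i23 F A (flipT F A (rpsi F A R ψ)) * i13 F A (tenK F A R ψ K) * i23 F A R := by
  rw [tenK, map_mul, map_mul, hQT.cop12_flipT_rpsi, cop12_one_tmul, hQT.copL, map_mul, map_mul]
  simp only [mul_assoc]

end CoproductOfTensorK

section FixedTensorK

variable {R Ri J Ji : A ⊗[F] A} {ψ : A ≃ₐ[F] A} {K Kinv : A}

lemma mapT_xiAut (hK1 : K * Kinv = 1) (hK2 : Kinv * K = 1) (x : A ⊗[F] A) :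
    mapT F A (xiAut ψ K Kinv hK1 hK2).toAlgHom (AlgHom.id F A) x =
      (Kinv ⊗ₜ 1) * mapT F A ψ.toAlgHom (AlgHom.id F A) x * (K ⊗ₜ 1) := by
  induction x using TensorProduct.induction_on with
  | zero => simp
  | tmul a b => simp only [mapT_tmul, Algebra.TensorProduct.tmul_mul_tmul, one_mul, mul_one]; rfl
  | add x y hx hy => rw [map_add, map_add, hx, hy, mul_add, add_mul]

lemma mapT_tenK (hQT : IsQT F A R Ri) (hTP : IsTwistPair F A R Ri J Ji ψ) (hK1 : K * Kinv = 1)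
    (hcop : cop F A K = Ji * ((1 ⊗ₜ K) * (rpsi F A R ψ * (K ⊗ₜ 1)))) :
    mapT F A ψ.toAlgHom (AlgHom.id F A) (tenK F A R ψ K) =
      (K ⊗ₜ 1) * tenK F A R ψ K * (Kinv ⊗ₜ 1) := by
  have hK₁ : (K ⊗ₜ[F] (1 : A)) * (Kinv ⊗ₜ 1) = 1 := by
    rw [Algebra.TensorProduct.tmul_mul_tmul, hK1, mul_one, Algebra.TensorProduct.one_def]
  have hJ : J * cop F A K = (1 ⊗ₜ K) * rpsi F A R ψ * (K ⊗ₜ 1) := by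
    rw [hcop, ← mul_assoc, hTP.mulInv, one_mul, mul_assoc]
  have hJi : Ji * (1 ⊗ₜ K) * rpsi F A R ψ = cop F A K * (Kinv ⊗ₜ 1) := by
    rw [hcop]; simp only [mul_assoc, hK₁, mul_one]
  have hflip : mapT F A ψ.toAlgHom (AlgHom.id F A) (flipT F A (rpsi F A R ψ)) =
      flipT F A J * R * Ji := by
    rw [rpsi, ← mapT, mapT_flipT, mapT_id_mapT, hTP.rrel]
  calc mapT F A ψ.toAlgHom (AlgHom.id F A) (tenK F A R ψ K)
      = flipT F A J * R * (Ji * (1 ⊗ₜ K) * rpsi F A R ψ) := by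
        rw [tenK, map_mul, map_mul, hflip, mapT_tmul, map_one, AlgHom.id_apply]
        simp only [mul_assoc]
        rfl
    _ = flipT F A J * copOp F A K * R * (Kinv ⊗ₜ 1) := by
        rw [hJi, mul_assoc _ R, ← mul_assoc R, hQT.mul_cop]; simp only [mul_assoc]
    _ = flipT F A (J * cop F A K) * R * (Kinv ⊗ₜ 1) := by rw [map_mul]; rfl
    _ = (K ⊗ₜ 1) * tenK F A R ψ K * (Kinv ⊗ₜ 1) := by
        rw [hJ, map_mul, map_mul, flipT_tmul, flipT_tmul, tenK]; simp only [mul_assoc]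

lemma mapT_xiAut_tenK (hQT : IsQT F A R Ri) (hTP : IsTwistPair F A R Ri J Ji ψ)
    (hK1 : K * Kinv = 1) (hK2 : Kinv * K = 1)
    (hcop : cop F A K = Ji * ((1 ⊗ₜ K) * (rpsi F A R ψ * (K ⊗ₜ 1)))) :
    mapT F A (xiAut ψ K Kinv hK1 hK2).toAlgHom (AlgHom.id F A) (tenK F A R ψ K) =
      tenK F A R ψ K := by
  have hK₂ : (Kinv ⊗ₜ[F] (1 : A)) * (K ⊗ₜ 1) = 1 := by
    rw [Algebra.TensorProduct.tmul_mul_tmul, hK2, mul_one, Algebra.TensorProduct.one_def]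
  rw [mapT_xiAut, mapT_tenK hQT hTP hK1 hcop]
  simp only [← mul_assoc, hK₂, one_mul]
  simp only [mul_assoc, hK₂, mul_one]

lemma tenK_mem_legSpan_fixSubalgebra (hQT : IsQT F A R Ri) (hTP : IsTwistPair F A R Ri J Ji ψ)
    (hK1 : K * Kinv = 1) (hK2 : Kinv * K = 1)
    (hcop : cop F A K = Ji * ((1 ⊗ₜ K) * (rpsi F A R ψ * (K ⊗ₜ 1)))) :
    tenK F A R ψ K ∈ legSpan F A (fixSubalgebra (xiAut ψ K Kinv hK1 hK2).toAlgHom) := by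
  apply mem_legSpan_fixSubalgebra_of_cop12
  rw [hQT.cop12_tenK, map_mul, map_mul, map_i23, map_i23, map_i13,
    mapT_xiAut_tenK hQT hTP hK1 hK2 hcop]

end FixedTensorK

end

/-- `B_ξ` is a right coideal subalgebra of `A` contained in `A^ξ`,
maximal among such, and the tensor K-matrix lies in `B_ξ ⊗ A`. -/
theorem statement7 {F A : Type*} [Field F] [Ring A] [Bialgebra F A]
    (R Ri : A ⊗[F] A) (hQT : IsQT F A R Ri)
    (ψ : A ≃ₐ[F] A) (J Ji : A ⊗[F] A) (hTP : IsTwistPair F A R Ri J Ji ψ)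
    (K Kinv : A) (hK1 : K * Kinv = 1) (hK2 : Kinv * K = 1)
    (hcop : cop F A K = Ji * (((1 : A) ⊗ₜ[F] K) * (rpsi F A R ψ * (K ⊗ₜ[F] (1 : A))))) :
    (∃ S : Subalgebra F A, (S : Set A) = BxiSet ψ K Kinv hK1 hK2) ∧
    (∀ a ∈ BxiSet ψ K Kinv hK1 hK2,
      cop F A a ∈ legSpan F A (BxiSet ψ K Kinv hK1 hK2)) ∧
    (∀ a ∈ BxiSet ψ K Kinv hK1 hK2, xiAut ψ K Kinv hK1 hK2 a = a) ∧
    (∀ B : Subalgebra F A, IsRightCoideal F A B →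
      (∀ b ∈ B, xiAut ψ K Kinv hK1 hK2 b = b) →
      (B : Set A) ⊆ BxiSet ψ K Kinv hK1 hK2) ∧
    tenK F A R ψ K ∈ legSpan F A (BxiSet ψ K Kinv hK1 hK2) := by
  set ξ := (xiAut ψ K Kinv hK1 hK2).toAlgHom
  have hBξ : BxiSet ψ K Kinv hK1 hK2 = fixSubalgebra ξ := rfl
  rw [hBξ]
  exact ⟨⟨fixSubalgebra ξ, rfl⟩, isRightCoideal_fixSubalgebra ξ,
    fun _ => apply_eq_self_of_mem_fixSubalgebra ξ, fun _ hB hξ => le_fixSubalgebra ξ hB hξ,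
    tenK_mem_legSpan_fixSubalgebra hQT hTP hK1 hK2 hcop⟩
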